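/- Let H be a complex Hilbert space with dim H ≥ 3 and let φ : B_s(H) → B_s(H) be a surjective map such that for all A, B, C ∈ B_s(H), A − B ↔_q C if and only if φ(A) − φ(B) ↔_q φ(C). Then for all A, B ∈ B_s(H), (φ(A) − φ(B))^# = φ(A − B)^# and (φ(A) − φ(B))^{##} = φ(A − B)^{##}; in particular, if φ(A) = φ(B) then A − B ∈ ℝI. -/

import Mathlib

noncomputable section

variable {H : Type*} [NormedAddCommGroup H] [InnerProductSpace ℂ H] [CompleteSpace H]

/-- `A ↔_q B`: the self-adjoint operators `A` and `B` quasi-commute, i.e.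
they either commute or anti-commute. -/
def CommQ (A B : selfAdjoint (H →L[ℂ] H)) : Prop :=
  (A : H →L[ℂ] H) * (B : H →L[ℂ] H) = (B : H →L[ℂ] H) * (A : H →L[ℂ] H) ∨
  (A : H →L[ℂ] H) * (B : H →L[ℂ] H) + (B : H →L[ℂ] H) * (A : H →L[ℂ] H) = 0

/-- `M^#`: the set of self-adjoint operators quasi-commuting with every member of `M`. -/
def QSet (M : Set (selfAdjoint (H →L[ℂ] H))) : Set (selfAdjoint (H →L[ℂ] H)) :=
  {X | ∀ T ∈ M, CommQ X T}

/-- `M^{##} = (M^#)^#`. -/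
def QQSet (M : Set (selfAdjoint (H →L[ℂ] H))) : Set (selfAdjoint (H →L[ℂ] H)) :=
  QSet (QSet M)

local notation "⟪" x ", " y "⟫" => @inner ℂ _ _ x y

section aux

set_option linter.unusedSectionVars false

/-- A self-adjoint operator quasi-commuting with every self-adjoint operator is a real
scalar multiple of the identity. -/
lemma scalar_of_commQ_all (x0 : H) (hx0 : x0 ≠ 0)
    (S : selfAdjoint (H →L[ℂ] H))
    (h : ∀ C : selfAdjoint (H →L[ℂ] H),
      (C : H →L[ℂ] H) * S = (S : H →L[ℂ] H) * C ∨
      (C : H →L[ℂ] H) * S + (S : H →L[ℂ] H) * C = 0) :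
    ∃ r : ℝ, (S : H →L[ℂ] H) = (r : ℂ) • 1 := by
  have heig : ∀ x : H, ∃ c : ℂ, (S : H →L[ℂ] H) x = c • x := by
    intro x
    rcases eq_or_ne x 0 with h0 | hx
    · exact ⟨0, by simp [h0]⟩
    have hxx : ⟪x, x⟫ ≠ 0 := fun hc => hx (inner_self_eq_zero.mp hc)
    have hP : IsSelfAdjoint ((innerSL ℂ x).smulRight x) := by
      rw [ContinuousLinearMap.isSelfAdjoint_iff_isSymmetric]
      intro a b
      simp [inner_smul_left, inner_smul_right, mul_comm]
    rcases h ⟨_, hP⟩ with hc | ha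
    · have hx2 := congrFun (congrArg DFunLike.coe hc) x
      simp only [ContinuousLinearMap.mul_apply, ContinuousLinearMap.smulRight_apply,
        innerSL_apply_apply, map_smul] at hx2
      refine ⟨⟪x, (S : H →L[ℂ] H) x⟫ / ⟪x, x⟫, ?_⟩
      rw [div_eq_inv_mul, mul_smul, hx2, inv_smul_smul₀ hxx]
    · have hx2 := congrFun (congrArg DFunLike.coe ha) x
      simp only [ContinuousLinearMap.add_apply, ContinuousLinearMap.mul_apply,
        ContinuousLinearMap.smulRight_apply, innerSL_apply_apply, map_smul,
        ContinuousLinearMap.zero_apply] at hx2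
      refine ⟨-⟪x, (S : H →L[ℂ] H) x⟫ / ⟪x, x⟫, ?_⟩
      rw [div_eq_inv_mul, mul_smul, neg_smul, neg_eq_of_add_eq_zero_right hx2,
        inv_smul_smul₀ hxx]
  obtain ⟨c, hc⟩ := heig x0
  have hall : ∀ y : H, (S : H →L[ℂ] H) y = c • y := by
    intro y
    obtain ⟨cy, hcy⟩ := heig y
    by_cases hdep : ∃ a : ℂ, y = a • x0
    · obtain ⟨a, rfl⟩ := hdep
      rw [map_smul, hc, smul_comm]
    · push_neg at hdep
      obtain ⟨c', hc'⟩ := heig (x0 + y)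
      rw [map_add, hc, hcy] at hc'
      rw [smul_add] at hc'
      have hkey : (c - c') • x0 = (c' - cy) • y := by
        rw [sub_smul, sub_smul]
        rw [sub_eq_sub_iff_add_eq_add]
        linear_combination (norm := module) hc'
      by_cases hcc : c' = cy
      · rw [hcc, sub_self, zero_smul] at hkey
        rcases smul_eq_zero.mp hkey with h0 | h0
        · rw [hcy, sub_eq_zero.mp h0]
        · exact absurd h0 hx0
      · exfalso
        refine hdep ((c' - cy)⁻¹ * (c - c')) ?_
        rw [mul_smul, hkey, inv_smul_smul₀ (sub_ne_zero.mpr hcc)]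
  have hSeq : (S : H →L[ℂ] H) = c • 1 := by
    ext y; simp [hall y]
  have hsa : IsSelfAdjoint (S : H →L[ℂ] H) := S.prop
  rw [hSeq] at hsa
  have hstar : (starRingEnd ℂ) c = c := by
    have h1 := hsa
    unfold IsSelfAdjoint at h1
    rw [star_smul, star_one] at h1
    have h2 := congrFun (congrArg DFunLike.coe h1) x0
    simp only [ContinuousLinearMap.smul_apply, ContinuousLinearMap.one_apply] at h2
    have h3 := sub_eq_zero.mpr h2
    rw [← sub_smul] at h3
    rcases smul_eq_zero.mp h3 with h4 | h4
    · exact sub_eq_zero.mp h4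
    · exact absurd h4 hx0
  refine ⟨c.re, ?_⟩
  rw [hSeq, Complex.conj_eq_iff_re.mp hstar]

/-- In a space of dimension at least 3 there is an orthonormal pair of vectors. -/
lemma exists_on_pair (hdim : 3 ≤ Module.rank ℂ H) :
    ∃ e1 e2 : H, ⟪e1, e1⟫ = 1 ∧ ⟪e2, e2⟫ = 1 ∧ ⟪e1, e2⟫ = 0 ∧ ⟪e2, e1⟫ = 0 := by
  have hnt : Nontrivial H := by
    by_contra hs
    rw [not_nontrivial_iff_subsingleton] at hs
    have := rank_subsingleton' ℂ H
    rw [this] at hdim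
    norm_num at hdim
  obtain ⟨x, hx⟩ := exists_ne (0 : H)
  have hK : ∃ y ∈ (ℂ ∙ x)ᗮ, y ≠ 0 := by
    by_contra hy
    push_neg at hy
    have hbot : (ℂ ∙ x)ᗮ = ⊥ := by
      rw [Submodule.eq_bot_iff]; exact hy
    have : (ℂ ∙ x) = ⊤ := Submodule.orthogonal_eq_bot_iff.mp hbot
    have hr : Module.rank ℂ H ≤ 1 := by
      rw [← rank_top ℂ H, ← this]
      exact (rank_span_le _).trans (by simp)
    have := hdim.trans hr
    norm_num at this
  obtain ⟨y, hyK, hy0⟩ := hK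
  have hxy : ⟪x, y⟫ = 0 :=
    (Submodule.mem_orthogonal _ y).mp hyK x (Submodule.mem_span_singleton_self x)
  have hyx : ⟪y, x⟫ = 0 := by rw [← inner_conj_symm, hxy, map_zero]
  have hnx : (‖x‖ : ℂ) ≠ 0 := by simpa using hx
  have hny : (‖y‖ : ℂ) ≠ 0 := by simpa using hy0
  refine ⟨(‖x‖ : ℂ)⁻¹ • x, (‖y‖ : ℂ)⁻¹ • y, ?_, ?_, ?_, ?_⟩
  · rw [inner_smul_left, inner_smul_right, inner_self_eq_norm_sq_to_K, map_inv₀,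
      Complex.conj_ofReal]
    field_simp
    rfl
  · rw [inner_smul_left, inner_smul_right, inner_self_eq_norm_sq_to_K, map_inv₀,
      Complex.conj_ofReal]
    field_simp
    rfl
  · rw [inner_smul_left, inner_smul_right, hxy, mul_zero, mul_zero]
  · rw [inner_smul_left, inner_smul_right, hyx, mul_zero, mul_zero]

variable (e1 e2 : H)

/-- The analogue of the Pauli matrix `σ_x` on the span of an orthonormal pair. -/
def opU : H →L[ℂ] H := (innerSL ℂ e2).smulRight e1 + (innerSL ℂ e1).smulRight e2

/-- The analogue of the Pauli matrix `σ_z` on the span of an orthonormal pair. -/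
def opW : H →L[ℂ] H := (innerSL ℂ e1).smulRight e1 - (innerSL ℂ e2).smulRight e2

lemma opU_apply (y : H) : opU e1 e2 y = ⟪e2, y⟫ • e1 + ⟪e1, y⟫ • e2 := by
  simp [opU]

lemma opW_apply (y : H) : opW e1 e2 y = ⟪e1, y⟫ • e1 - ⟪e2, y⟫ • e2 := by
  simp [opW]

lemma opU_sa : IsSelfAdjoint (opU e1 e2) := by
  rw [ContinuousLinearMap.isSelfAdjoint_iff_isSymmetric]
  intro a b
  simp only [ContinuousLinearMap.coe_coe, opU_apply, inner_add_left, inner_add_right,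
    inner_smul_left, inner_smul_right, ← inner_conj_symm a e1, ← inner_conj_symm a e2]
  ring

lemma opW_sa : IsSelfAdjoint (opW e1 e2) := by
  rw [ContinuousLinearMap.isSelfAdjoint_iff_isSymmetric]
  intro a b
  simp only [ContinuousLinearMap.coe_coe, opW_apply, inner_sub_left, inner_sub_right,
    inner_smul_left, inner_smul_right, ← inner_conj_symm a e1, ← inner_conj_symm a e2]
  ring

variable {e1 e2}
variable (h11 : ⟪e1, e1⟫ = 1) (h22 : ⟪e2, e2⟫ = 1) (h12 : ⟪e1, e2⟫ = 0) (h21 : ⟪e2, e1⟫ = 0)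

include h11 h22 h12 h21 in
lemma opUW_anticomm : opU e1 e2 * opW e1 e2 + opW e1 e2 * opU e1 e2 = 0 := by
  ext y
  simp only [ContinuousLinearMap.add_apply, ContinuousLinearMap.mul_apply,
    ContinuousLinearMap.zero_apply, opU_apply, opW_apply, inner_add_right, inner_sub_right,
    inner_smul_right, h11, h22, h12, h21]
  module

include h11 h22 h12 h21 in
lemma opUW_ne : opU e1 e2 * opW e1 e2 ≠ opW e1 e2 * opU e1 e2 := by
  intro hcomm
  have h := congrFun (congrArg DFunLike.coe hcomm) e1
  simp only [ContinuousLinearMap.mul_apply, opU_apply, opW_apply, inner_add_right,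
    inner_sub_right, inner_smul_right, h11, h22, h12, h21] at h
  have h2 := congrArg (fun z => ⟪e2, z⟫) h
  simp only [inner_add_right, inner_sub_right, inner_smul_right, h11, h22, h12, h21] at h2
  norm_num at h2

lemma commQ_symm {A B : selfAdjoint (H →L[ℂ] H)} (h : CommQ A B) : CommQ B A := by
  rcases h with h | h
  · exact Or.inl h.symm
  · exact Or.inr (by rw [add_comm]; exact h)

lemma commQ_zero_left (A : selfAdjoint (H →L[ℂ] H)) : CommQ 0 A :=
  Or.inl (by simp)

lemma commQ_zero_right (A : selfAdjoint (H →L[ℂ] H)) : CommQ A 0 :=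
  Or.inl (by simp)

end aux

theorem stmt18
    (hdim : 3 ≤ Module.rank ℂ H)
    (φ : selfAdjoint (H →L[ℂ] H) → selfAdjoint (H →L[ℂ] H))
    (hsurj : Function.Surjective φ)
    (hpres : ∀ A B C : selfAdjoint (H →L[ℂ] H),
      CommQ (A - B) C ↔ CommQ (φ A - φ B) (φ C)) :
    ∀ A B : selfAdjoint (H →L[ℂ] H),
      QSet {φ A - φ B} = QSet {φ (A - B)} ∧
      QQSet {φ A - φ B} = QQSet {φ (A - B)} ∧
      (φ A = φ B →
        ∃ r : ℝ, ((A - B : selfAdjoint (H →L[ℂ] H)) : H →L[ℂ] H) = (r : ℂ) • 1) := by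
  obtain ⟨e1, e2, h11, h22, h12, h21⟩ := exists_on_pair hdim
  have he1 : e1 ≠ 0 := by
    intro h
    rw [h, inner_zero_left] at h11
    exact zero_ne_one h11
  -- `φ 0` quasi-commutes with everything
  have hφ0 : ∀ X, CommQ X (φ 0) := by
    intro X
    obtain ⟨C, hC⟩ := hsurj (X + φ 0)
    have h := (hpres C 0 0).mp (by rw [sub_zero]; exact commQ_zero_right C)
    rw [hC, add_sub_cancel_right] at h
    exact h
  obtain ⟨r, hr⟩ := scalar_of_commQ_all e1 he1 (φ 0) (fun C => hφ0 C)
  -- the swap property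
  have hswap : ∀ U V : selfAdjoint (H →L[ℂ] H),
      CommQ U (V + φ 0) ↔ CommQ V (U + φ 0) := by
    intro U V
    obtain ⟨S, hS⟩ := hsurj (U + φ 0)
    obtain ⟨C, hC⟩ := hsurj (V + φ 0)
    have h1 := hpres S 0 C
    have h2 := hpres C 0 S
    rw [sub_zero, hS, hC, add_sub_cancel_right] at h1
    rw [sub_zero, hS, hC, add_sub_cancel_right] at h2
    constructor
    · intro h; exact h2.mp (commQ_symm (h1.mpr h))
    · intro h; exact h1.mp (commQ_symm (h2.mpr h))
  -- `φ 0 = 0`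
  have hr0 : r = 0 := by
    set U : selfAdjoint (H →L[ℂ] H) := ⟨opU e1 e2, opU_sa e1 e2⟩ with hU
    set W : selfAdjoint (H →L[ℂ] H) := ⟨opW e1 e2, opW_sa e1 e2⟩ with hW
    have hLHS : CommQ U (W - φ 0 + φ 0) := by
      rw [sub_add_cancel]
      exact Or.inr (opUW_anticomm h11 h22 h12 h21)
    have hRHS := (hswap U (W - φ 0)).mp hLHS
    have hT1 : ((W - φ 0 : selfAdjoint (H →L[ℂ] H)) : H →L[ℂ] H)
        = opW e1 e2 - (r : ℂ) • 1 := by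
      rw [AddSubgroup.coe_sub, hr, hW]
    have hT2 : ((U + φ 0 : selfAdjoint (H →L[ℂ] H)) : H →L[ℂ] H)
        = opU e1 e2 + (r : ℂ) • 1 := by
      rw [AddSubgroup.coe_add, hr, hU]
    rcases hRHS with hcomm | hanti
    · exfalso
      rw [hT1, hT2] at hcomm
      have h := congrArg (fun T : H →L[ℂ] H => ⟪e2, T e1⟫) hcomm
      simp only [ContinuousLinearMap.mul_apply, ContinuousLinearMap.sub_apply,
        ContinuousLinearMap.add_apply, ContinuousLinearMap.smul_apply,
        ContinuousLinearMap.one_apply, map_add, map_sub, map_smul, opU_apply, opW_apply,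
        inner_add_right, inner_sub_right, inner_smul_right, h11, h22, h12, h21] at h
      norm_num at h
    · rw [hT1, hT2] at hanti
      have h := congrArg (fun T : H →L[ℂ] H => ⟪e2, T e1⟫) hanti
      simp only [ContinuousLinearMap.add_apply, ContinuousLinearMap.mul_apply,
        ContinuousLinearMap.sub_apply, ContinuousLinearMap.smul_apply,
        ContinuousLinearMap.one_apply, ContinuousLinearMap.zero_apply, map_add, map_sub,
        map_smul, opU_apply, opW_apply, inner_add_right, inner_sub_right, inner_smul_right,
        inner_zero_right, h11, h22, h12, h21] at h
      -- h should reduce to an equation forcing r = 0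
      have : (r : ℂ) = 0 := by
        linear_combination -h / 2
      exact_mod_cast this
  have hφ0eq : φ 0 = 0 := by
    apply Subtype.ext
    rw [hr, hr0]
    simp
  intro A B
  have hkey : ∀ C, CommQ (φ A - φ B) (φ C) ↔ CommQ (φ (A - B)) (φ C) := by
    intro C
    rw [← hpres A B C]
    have h := hpres (A - B) 0 C
    rw [sub_zero, hφ0eq, sub_zero] at h
    exact h
  have hqset : QSet {φ A - φ B} = QSet {φ (A - B)} := by
    ext X
    obtain ⟨C, rfl⟩ := hsurj X
    simp only [QSet, Set.mem_setOf_eq, Set.mem_singleton_iff, forall_eq]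
    constructor
    · intro h; exact commQ_symm ((hkey C).mp (commQ_symm h))
    · intro h; exact commQ_symm ((hkey C).mpr (commQ_symm h))
  refine ⟨hqset, by rw [QQSet, QQSet, hqset], ?_⟩
  intro hAB
  refine scalar_of_commQ_all e1 he1 (A - B) ?_
  intro C
  have h : CommQ (A - B) C := by
    refine (hpres A B C).mpr ?_
    rw [hAB, sub_self]
    exact commQ_zero_left (φ C)
  exact commQ_symm h
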